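/- Mean-aggregation overall bound validity: with disjoint finite index sets I1, I2, I3, bounds l ≤ u, and budget s, define for each feasible pair (s2, s3) (with s2+s3 ≤ s, s2 ≤ |I2|, s3 ≤ |I3|) the quantity M(s2,s3) = 0 if I1 = ∅, s2 = |I2|, s3 = 0, and otherwise M(s2,s3) = (Σ_{i∈I1} u(i) + sum of the (|I2|−s2) largest upper bounds in I2 + sum of the s3 largest upper bounds in I3) / (|I1|+|I2|−s2+s3). Then for every admissible selection S2 ⊆ I2, S3 ⊆ I3 with |I2\S2|+|S3| ≤ s and every l ≤ x ≤ u, the mean of x over I1 ∪ S2 ∪ S3 (with mean over the empty set defined as 0) is at most the maximum of M(s2,s3) over all feasible pairs, and this maximum is attained by some admissible selection and assignment. -/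

import Mathlib

noncomputable def kthLargest (Y : Multiset ℝ) (i : ℕ) : ℝ :=
  ((Y.sort (· ≤ ·)).reverse).getD (i - 1) 0

noncomputable def kthSmallest (Y : Multiset ℝ) (i : ℕ) : ℝ :=
  (Y.sort (· ≤ ·)).getD (i - 1) 0

/-- Mean of `x` over a finset (equal to `0` on the empty set, since `x/0 = 0` in `ℝ`). -/
noncomputable def meanF {ι : Type*} (S : Finset ι) (x : ι → ℝ) : ℝ :=
  (∑ i ∈ S, x i) / S.card

/-- Sum of the `k` largest values of `u` over `J`. -/
noncomputable def topSum {ι : Type*} (J : Finset ι) (u : ι → ℝ) (k : ℕ) : ℝ :=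
  ∑ i ∈ Finset.range k, kthLargest (J.val.map u) (i + 1)

/-!
If `l ≤ x ≤ u`, the mean of `x` over `I₁ ∪ S₂ ∪ S₃` is at most that of `u`, and the sum of `u` over
`S₂ ⊆ I₂` is at most the sum of the `|S₂|` largest values of `u` on `I₂`: listing `I₂` by decreasing
`u`, the first `|S₂|` entries dominate every other index, so exchanging the parts of `S₂` and of
that prefix outside each other can only increase the sum. Hence every admissible selection is
dominated by `M(|I₂ \ S₂|, |S₃|)`. Conversely such prefixes with `x = u` attain `M` at every
feasible pair, in particular at a maximising one, which exists as there are finitely many pairs.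
-/
open Finset

theorem Finset.sum_le_sum_of_card_eq_of_sdiff_le {ι M : Type*} [DecidableEq ι] [AddCommMonoid M]
    [LinearOrder M] [IsOrderedAddMonoid M] {S T : Finset ι} {f : ι → M} (hcard : #T = #S)
    (h : ∀ i ∈ S \ T, ∀ j ∈ T \ S, f j ≤ f i) : ∑ j ∈ T, f j ≤ ∑ i ∈ S, f i := by
  obtain ⟨c, hTc, hcS⟩ : ∃ c, (∀ j ∈ T \ S, f j ≤ c) ∧ ∀ i ∈ S \ T, c ≤ f i := by
    rcases (S \ T).eq_empty_or_nonempty with hST | hST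
    · have hTS : T \ S = ∅ := card_eq_zero.1 (by rw [card_sdiff_comm hcard, hST, card_empty])
      exact ⟨0, by simp [hTS], by simp [hST]⟩
    · obtain ⟨i₀, hi₀, hmin⟩ := (S \ T).exists_min_image f hST
      exact ⟨f i₀, h i₀ hi₀, hmin⟩
  calc ∑ j ∈ T, f j = ∑ j ∈ T ∩ S, f j + ∑ j ∈ T \ S, f j := (sum_inter_add_sum_sdiff ..).symm
    _ ≤ ∑ j ∈ T ∩ S, f j + #(T \ S) • c := by grw [sum_le_card_nsmul _ _ _ hTc]
    _ = ∑ i ∈ S ∩ T, f i + #(S \ T) • c := by rw [inter_comm, card_sdiff_comm hcard]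
    _ ≤ ∑ i ∈ S ∩ T, f i + ∑ i ∈ S \ T, f i := by grw [card_nsmul_le_sum _ _ _ hcS]
    _ = ∑ i ∈ S, f i := sum_inter_add_sum_sdiff ..

theorem List.sum_range_getD_eq_sum_take {M : Type*} [AddCommMonoid M] (l : List M) (k : ℕ) :
    ∑ i ∈ Finset.range k, l.getD i 0 = (l.take k).sum := by
  induction k with
  | zero => simp
  | succ n ih =>
    rw [Finset.sum_range_succ, ih, List.take_add_one, List.sum_append, List.getD_eq_getElem?_getD]
    rcases l[n]? with _ | a <;> simp

section TopSum

variable {ι : Type*}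

theorem topSum_eq_sum_take (J : Finset ι) (u : ι → ℝ) (k : ℕ) :
    topSum J u k = ((((J.val.map u).sort (· ≤ ·)).reverse).take k).sum := by
  simp only [topSum, kthLargest, Nat.add_sub_cancel]
  exact List.sum_range_getD_eq_sum_take _ k

variable [DecidableEq ι]

theorem exists_subset_card_eq_sum_eq_topSum (J : Finset ι) (u : ι → ℝ) {k : ℕ} (hk : k ≤ #J) :
    ∃ S ⊆ J, #S = k ∧ (∀ i ∈ S, ∀ j ∈ J \ S, u j ≤ u i) ∧ ∑ i ∈ S, u i = topSum J u k := by
  set L := J.toList.mergeSort (fun a b => decide (u b ≤ u a))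
  have hperm : L.Perm J.toList := List.mergeSort_perm _ _
  have hnodup : L.Nodup := hperm.nodup_iff.2 J.nodup_toList
  have hsorted : L.Pairwise (fun a b => u b ≤ u a) := by
    simpa using List.pairwise_mergeSort (le := fun a b => decide (u b ≤ u a))
      (fun a b c hab hbc => by simp only [decide_eq_true_eq] at *; linarith)
      (fun a b => by simpa using le_total (u b) (u a)) J.toList
  have hmap : L.map u = ((J.val.map u).sort (· ≤ ·)).reverse := by
    refine List.Perm.eq_of_pairwise' (r := (· ≥ ·)) (List.pairwise_map.2 hsorted)
      (List.pairwise_reverse.2 (Multiset.pairwise_sort _ _)) ?_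
    rw [← Multiset.coe_eq_coe, Multiset.coe_reverse, Multiset.sort_eq, ← Multiset.map_coe,
      Multiset.coe_eq_coe.2 hperm, coe_toList]
  have hmem {i : ι} : i ∈ L ↔ i ∈ J := hperm.mem_iff.trans mem_toList
  refine ⟨(L.take k).toFinset, fun i hi => hmem.1 (List.mem_of_mem_take (List.mem_toFinset.1 hi)),
    ?_, ?_, ?_⟩
  · rw [List.toFinset_card_of_nodup (hnodup.sublist (List.take_sublist _ _)), List.length_take,
      hperm.length_eq, length_toList]
    omega
  · intro i hi j hj
    rw [mem_sdiff, List.mem_toFinset] at hj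
    have hsplit := List.pairwise_append.1 ((L.take_append_drop k).symm ▸ hsorted)
    refine hsplit.2.2 i (List.mem_toFinset.1 hi) j ?_
    have := hmem.2 hj.1
    rw [← L.take_append_drop k, List.mem_append] at this
    exact this.resolve_left hj.2
  · rw [List.sum_toFinset _ (hnodup.sublist (List.take_sublist _ _)), List.map_take, hmap,
      topSum_eq_sum_take]

theorem sum_le_topSum {J T : Finset ι} (hT : T ⊆ J) (u : ι → ℝ) :
    ∑ i ∈ T, u i ≤ topSum J u #T := by
  obtain ⟨S, -, hcard, htop, hsum⟩ := exists_subset_card_eq_sum_eq_topSum J u (card_le_card hT)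
  rw [← hsum]
  exact sum_le_sum_of_card_eq_of_sdiff_le hcard.symm fun i hi j hj =>
    htop i (mem_sdiff.1 hi).1 j (sdiff_subset_sdiff hT subset_rfl hj)

end TopSum

section Mean

variable {ι : Type*} [DecidableEq ι]

theorem meanF_union_union {A B C : Finset ι} (hAB : Disjoint A B) (hAC : Disjoint A C)
    (hBC : Disjoint B C) (x : ι → ℝ) :
    meanF (A ∪ B ∪ C) x =
      (∑ i ∈ A, x i + ∑ i ∈ B, x i + ∑ i ∈ C, x i) / ((#A + #B + #C : ℕ) : ℝ) := by
  have hABC : Disjoint (A ∪ B) C := disjoint_union_left.2 ⟨hAC, hBC⟩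
  rw [meanF, sum_union hABC, sum_union hAB, card_union_of_disjoint hABC,
    card_union_of_disjoint hAB]

noncomputable def selectionBound (I₁ I₂ I₃ : Finset ι) (u : ι → ℝ) (k₂ k₃ : ℕ) : ℝ :=
  (∑ i ∈ I₁, u i + topSum I₂ u k₂ + topSum I₃ u k₃) / ((#I₁ + k₂ + k₃ : ℕ) : ℝ)

variable {I₁ I₂ I₃ : Finset ι}

theorem meanF_le_selectionBound (h₁₂ : Disjoint I₁ I₂) (h₁₃ : Disjoint I₁ I₃)
    (h₂₃ : Disjoint I₂ I₃) {S₂ S₃ : Finset ι} (hS₂ : S₂ ⊆ I₂) (hS₃ : S₃ ⊆ I₃)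
    {x u : ι → ℝ} (hxu : ∀ i ∈ I₁ ∪ S₂ ∪ S₃, x i ≤ u i) :
    meanF (I₁ ∪ S₂ ∪ S₃) x ≤ selectionBound I₁ I₂ I₃ u #S₂ #S₃ := by
  rw [meanF_union_union (h₁₂.mono_right hS₂) (h₁₃.mono_right hS₃) (h₂₃.mono hS₂ hS₃),
    selectionBound]
  gcongr with i hi i hi
  · exact hxu i (by simp [hi])
  · exact (sum_le_sum fun i hi => hxu i (by simp [hi])).trans (sum_le_topSum hS₂ u)
  · exact (sum_le_sum fun i hi => hxu i (by simp [hi])).trans (sum_le_topSum hS₃ u)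

theorem exists_meanF_eq_selectionBound (h₁₂ : Disjoint I₁ I₂) (h₁₃ : Disjoint I₁ I₃)
    (h₂₃ : Disjoint I₂ I₃) (u : ι → ℝ) {k₂ k₃ : ℕ} (hk₂ : k₂ ≤ #I₂) (hk₃ : k₃ ≤ #I₃) :
    ∃ S₂ ⊆ I₂, ∃ S₃ ⊆ I₃, #S₂ = k₂ ∧ #S₃ = k₃ ∧
      meanF (I₁ ∪ S₂ ∪ S₃) u = selectionBound I₁ I₂ I₃ u k₂ k₃ := by
  obtain ⟨S₂, hS₂, hcard₂, -, hsum₂⟩ := exists_subset_card_eq_sum_eq_topSum I₂ u hk₂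
  obtain ⟨S₃, hS₃, hcard₃, -, hsum₃⟩ := exists_subset_card_eq_sum_eq_topSum I₃ u hk₃
  refine ⟨S₂, hS₂, S₃, hS₃, hcard₂, hcard₃, ?_⟩
  rw [meanF_union_union (h₁₂.mono_right hS₂) (h₁₃.mono_right hS₃) (h₂₃.mono hS₂ hS₃),
    selectionBound, hsum₂, hsum₃, hcard₂, hcard₃]

/-- The bound `M(s₂, s₃)` of the statement, where `s₂` indices of `I₂` are dropped and `s₃` of `I₃`
are added. -/
noncomputable def budgetBound (I₁ I₂ I₃ : Finset ι) (u : ι → ℝ) (s₂ s₃ : ℕ) : ℝ :=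
  if I₁ = (∅ : Finset ι) ∧ s₂ = I₂.card ∧ s₃ = 0 then 0 else
    ((∑ i ∈ I₁, u i) + topSum I₂ u (I₂.card - s₂) + topSum I₃ u s₃) /
      ((I₁.card + I₂.card - s₂ + s₃ : ℕ) : ℝ)

theorem budgetBound_eq_selectionBound (u : ι → ℝ) {s₂ : ℕ} (hs₂ : s₂ ≤ #I₂) (s₃ : ℕ) :
    budgetBound I₁ I₂ I₃ u s₂ s₃ = selectionBound I₁ I₂ I₃ u (#I₂ - s₂) s₃ := by
  rw [budgetBound, selectionBound, Nat.add_sub_assoc hs₂]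
  -- the exceptional case only repeats the convention `0 / 0 = 0`
  split_ifs with h
  · obtain ⟨rfl, rfl, rfl⟩ := h
    simp [topSum]
  · rfl

end Mean

def feasibleValues (f : ℕ → ℕ → ℝ) (s a b : ℕ) : Set ℝ :=
  {y | ∃ s₂ s₃ : ℕ, s₂ + s₃ ≤ s ∧ s₂ ≤ a ∧ s₃ ≤ b ∧ y = f s₂ s₃}

theorem isGreatest_sSup_feasibleValues (f : ℕ → ℕ → ℝ) (s a b : ℕ) :
    IsGreatest (feasibleValues f s a b) (sSup (feasibleValues f s a b)) := by
  have hfin : (feasibleValues f s a b).Finite :=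
    ((Set.finite_Iic a).image2 f (Set.finite_Iic b)).subset
      fun _ ⟨s₂, s₃, _, hs₂, hs₃, hy⟩ => ⟨s₂, hs₂, s₃, hs₃, hy.symm⟩
  have hne : (feasibleValues f s a b).Nonempty := ⟨f 0 0, 0, 0, by simp⟩
  exact ⟨hne.csSup_mem hfin, fun _ hy => le_csSup hfin.bddAbove hy⟩

/-- Mean-aggregation overall upper bound validity and attainment: `B` is the
maximum over feasible exact-budget pairs `(s2,s3)` of the fixed-budget bound. -/
theorem stmt18 {ι : Type*} [DecidableEq ι] (I1 I2 I3 : Finset ι)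
    (h12 : Disjoint I1 I2) (h13 : Disjoint I1 I3) (h23 : Disjoint I2 I3)
    (l u : ι → ℝ) (hlu : ∀ i ∈ I1 ∪ I2 ∪ I3, l i ≤ u i) (s : ℕ)
    (B : ℝ)
    (hB : B = sSup {y : ℝ | ∃ s2 s3 : ℕ, s2 + s3 ≤ s ∧ s2 ≤ I2.card ∧ s3 ≤ I3.card ∧
      y = if I1 = (∅ : Finset ι) ∧ s2 = I2.card ∧ s3 = 0 then 0 else
        ((∑ i ∈ I1, u i) + topSum I2 u (I2.card - s2) + topSum I3 u s3) /
          ((I1.card + I2.card - s2 + s3 : ℕ) : ℝ)}) :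
    (∀ S2 ⊆ I2, ∀ S3 ⊆ I3, (I2 \ S2).card + S3.card ≤ s →
      ∀ x : ι → ℝ, (∀ i ∈ I1 ∪ I2 ∪ I3, l i ≤ x i ∧ x i ≤ u i) →
        meanF (I1 ∪ S2 ∪ S3) x ≤ B) ∧
    (∃ S2 ⊆ I2, ∃ S3 ⊆ I3, (I2 \ S2).card + S3.card ≤ s ∧
      ∃ x : ι → ℝ, (∀ i ∈ I1 ∪ I2 ∪ I3, l i ≤ x i ∧ x i ≤ u i) ∧
        meanF (I1 ∪ S2 ∪ S3) x = B) := by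
  have hG : IsGreatest (feasibleValues (budgetBound I1 I2 I3 u) s #I2 #I3) B := by
    rw [hB]
    exact isGreatest_sSup_feasibleValues _ _ _ _
  obtain ⟨⟨s₂, s₃, hs, hs₂, hs₃, rfl⟩, hmax⟩ := hG
  constructor
  · intro S2 hS2 S3 hS3 hbudget x hx
    have hsub : I1 ∪ S2 ∪ S3 ⊆ I1 ∪ I2 ∪ I3 := by gcongr
    have hkept : #I2 - #(I2 \ S2) = #S2 := by
      rw [card_sdiff_of_subset hS2, Nat.sub_sub_self (card_le_card hS2)]
    calc meanF (I1 ∪ S2 ∪ S3) x ≤ selectionBound I1 I2 I3 u #S2 #S3 :=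
          meanF_le_selectionBound h12 h13 h23 hS2 hS3 fun i hi => (hx i (hsub hi)).2
      _ = budgetBound I1 I2 I3 u #(I2 \ S2) #S3 := by
          rw [budgetBound_eq_selectionBound u (card_le_card sdiff_subset), hkept]
      _ ≤ _ := hmax ⟨_, _, hbudget, card_le_card sdiff_subset, card_le_card hS3, rfl⟩
  · obtain ⟨S2, hS2, S3, hS3, hcard₂, hcard₃, hmean⟩ :=
      exists_meanF_eq_selectionBound h12 h13 h23 u (Nat.sub_le #I2 s₂) hs₃
    refine ⟨S2, hS2, S3, hS3, ?_, u, fun i hi => ⟨hlu i hi, le_rfl⟩, ?_⟩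
    · rw [card_sdiff_of_subset hS2, hcard₂, hcard₃]
      omega
    · rw [hmean, budgetBound_eq_selectionBound u hs₂]
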